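/- arXiv:1009.0385 — 2 statements merged into one kernel-verified Lean document; each statement's English description precedes it below -/
import Mathlib

section
/- Let M be a negative definite symmetric n×n integer matrix. The rational cone Cone(E) spanned by E = { v ∈ ℤⁿ | M·v ≤ 0 componentwise } in ℚⁿ is generated by the n linearly independent vectors F_i = -M⁻¹·e_i, i = 1,…,n; in particular the cone is simplicial of dimension n. -/
/-!
Definiteness makes `M` invertible over `ℚ`. Since `M F_i = -e_i`, the `F_i` are the columns of
the invertible matrix `-M⁻¹`, and every `v` satisfies `v = ∑ i, (-(M v)_i) • F_i`, with
nonnegative coefficients exactly when `v ∈ E`. Clearing the denominators of `F_i` gives an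
integer vector `w = d • F_i` with `M w = -d • e_i ≤ 0`.
-/

open Matrix

namespace Matrix

theorem map_intCast_mulVec {m ι R : Type*} [Fintype ι] [Ring R] (M : Matrix m ι ℤ)
    (v : ι → ℤ) :
    M.map (Int.cast : ℤ → R) *ᵥ (fun j => (v j : R)) = fun i => ((M *ᵥ v) i : R) := by
  funext i
  exact (RingHom.map_mulVec (Int.castRingHom R) M v i).symm

section Field

variable {ι K : Type*} [Fintype ι] [DecidableEq ι] [Field K]

theorem det_ne_zero_of_dotProduct_mulVec_ne_zero (A : Matrix ι ι K)
    (hA : ∀ x : ι → K, x ≠ 0 → x ⬝ᵥ (A *ᵥ x) ≠ 0) : A.det ≠ 0 := by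
  intro hdet
  obtain ⟨x, hx, hAx⟩ := exists_mulVec_eq_zero_iff.2 hdet
  exact hA x hx (by rw [hAx, dotProduct_zero])

theorem linearIndependent_neg_inv_mulVec_single (A : Matrix ι ι K) (hA : IsUnit A.det) :
    LinearIndependent K fun i => -(A⁻¹ *ᵥ Pi.single i 1) := by
  have hcol : (fun i => -(A⁻¹ *ᵥ Pi.single i 1)) = (-A⁻¹).col := by
    funext i
    rw [← neg_mulVec, mulVec_single_one]
  rw [hcol, linearIndependent_cols_iff_isUnit, IsUnit.neg_iff, isUnit_nonsing_inv_iff]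
  exact (isUnit_iff_isUnit_det A).2 hA

theorem sum_mulVec_smul_inv_mulVec_single (A : Matrix ι ι K) (hA : IsUnit A.det) (x : ι → K) :
    ∑ i, (A *ᵥ x) i • (A⁻¹ *ᵥ Pi.single i 1) = x :=
  calc ∑ i, (A *ᵥ x) i • (A⁻¹ *ᵥ Pi.single i 1)
      = A⁻¹ *ᵥ ∑ i, (A *ᵥ x) i • Pi.single i 1 := by
        simp only [mulVec_sum, mulVec_smul]
    _ = A⁻¹ *ᵥ (A *ᵥ x) := by rw [← pi_eq_sum_univ']
    _ = x := by rw [mulVec_mulVec, nonsing_inv_mul _ hA, one_mulVec]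

end Field

end Matrix

theorem exists_pos_nat_smul_eq_intCast {ι : Type*} [Fintype ι] (y : ι → ℚ) :
    ∃ d : ℕ, 0 < d ∧ ∃ w : ι → ℤ, (d : ℚ) • y = fun j => (w j : ℚ) := by
  classical
  refine ⟨∏ j, (y j).den, Finset.prod_pos fun j _ => (y j).den_pos,
    fun j => (∏ k ∈ Finset.univ.erase j, (y k).den : ℕ) * (y j).num, ?_⟩
  funext j
  rw [Pi.smul_apply, smul_eq_mul, ← Finset.mul_prod_erase _ _ (Finset.mem_univ j)]
  push_cast
  rw [← Rat.mul_den_eq_num]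
  ring

theorem stmt14_general (n : ℕ) (M : Matrix (Fin n) (Fin n) ℤ)
    (hnd : ∀ x : Fin n → ℚ, x ≠ 0 → x ⬝ᵥ ((M.map (Int.cast : ℤ → ℚ)) *ᵥ x) < 0)
    (F : Fin n → Fin n → ℚ)
    (hF : ∀ i, F i = -((M.map (Int.cast : ℤ → ℚ))⁻¹ *ᵥ Pi.single i 1)) :
    LinearIndependent ℚ F ∧
    (∀ v : Fin n → ℤ, (∀ i, (M *ᵥ v) i ≤ 0) →
      ∃ c : Fin n → ℚ, (∀ i, 0 ≤ c i) ∧ (fun i => (v i : ℚ)) = ∑ i, c i • F i) ∧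
    (∀ i, ∃ (q : ℚ) (v : Fin n → ℤ), 0 < q ∧ (∀ j, (M *ᵥ v) j ≤ 0) ∧
      F i = q • fun j => (v j : ℚ)) := by
  set A := M.map (Int.cast : ℤ → ℚ)
  have hA : IsUnit A.det :=
    (A.det_ne_zero_of_dotProduct_mulVec_ne_zero fun x hx => (hnd x hx).ne).isUnit
  obtain rfl : F = fun i => -(A⁻¹ *ᵥ Pi.single i 1) := funext hF
  refine ⟨A.linearIndependent_neg_inv_mulVec_single hA, fun v hv => ?_, fun i => ?_⟩
  · have hAv : A *ᵥ (fun j => (v j : ℚ)) = fun i => ((M *ᵥ v) i : ℚ) := map_intCast_mulVec M v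
    refine ⟨fun i => -((M *ᵥ v) i : ℚ), fun i => neg_nonneg.2 (Int.cast_nonpos.2 (hv i)), ?_⟩
    simpa only [neg_smul_neg, hAv] using
      (A.sum_mulVec_smul_inv_mulVec_single hA fun j => (v j : ℚ)).symm
  · obtain ⟨d, hd, w, hw⟩ := exists_pos_nat_smul_eq_intCast (-(A⁻¹ *ᵥ Pi.single i 1))
    have hMw : (fun j => ((M *ᵥ w) j : ℚ)) = -((d : ℚ) • Pi.single i 1) := by
      rw [← map_intCast_mulVec, ← hw, mulVec_smul, mulVec_neg, mulVec_mulVec,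
        mul_nonsing_inv _ hA, one_mulVec, smul_neg]
    refine ⟨(d : ℚ)⁻¹, w, by positivity, fun j => (Int.cast_nonpos (R := ℚ)).1 ?_, ?_⟩
    · rw [congrFun hMw j, Pi.neg_apply, Pi.smul_apply, smul_eq_mul, neg_nonpos]
      have hsingle : (0 : Fin n → ℚ) ≤ Pi.single i 1 := Pi.single_nonneg.2 zero_le_one
      exact mul_nonneg d.cast_nonneg (hsingle j)
    · rw [← hw, smul_smul, inv_mul_cancel₀ (by positivity), one_smul]

/-- The rational cone spanned by `E = { v ∈ ℤⁿ | M·v ≤ 0 }` is simplicial of dimension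
`n`: it is generated by the `n` linearly independent vectors `F_i = -M⁻¹·e_i`; every
element of `E` is a nonnegative rational combination of the `F_i`, and each `F_i` is a
positive rational multiple of an element of `E`. -/
theorem stmt14 (n : ℕ) (M : Matrix (Fin n) (Fin n) ℤ) (hsymm : M.IsSymm)
    (hnd : ∀ x : Fin n → ℚ, x ≠ 0 → x ⬝ᵥ ((M.map (Int.cast : ℤ → ℚ)) *ᵥ x) < 0)
    (F : Fin n → Fin n → ℚ)
    (hF : ∀ i, F i = -((M.map (Int.cast : ℤ → ℚ))⁻¹ *ᵥ Pi.single i 1)) :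
    LinearIndependent ℚ F ∧
    (∀ v : Fin n → ℤ, (∀ i, (M *ᵥ v) i ≤ 0) →
      ∃ c : Fin n → ℚ, (∀ i, 0 ≤ c i) ∧ (fun i => (v i : ℚ)) = ∑ i, c i • F i) ∧
    (∀ i, ∃ (q : ℚ) (v : Fin n → ℤ), 0 < q ∧ (∀ j, (M *ᵥ v) j ≤ 0) ∧
      F i = q • fun j => (v j : ℚ)) :=
  stmt14_general n M hnd F hF
end

section
/- Let M = [[-2,1],[1,-2]] and S₂ = { d ∈ ℕ² | ∃ v ∈ ℕ², M·v = -d }. Then S₂ is generated as an additive monoid by {(3,0),(1,1),(0,3)}. -/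
/-- For the A₂ singularity, `S₂ = { d ∈ ℕ² | ∃ v ∈ ℕ², M·v = -d }` with
`M = [[-2,1],[1,-2]]` is generated as an additive monoid by `(3,0)`, `(1,1)`, `(0,3)`. -/
theorem stmt18 (d : ℕ × ℕ)
    (h : ∃ v : ℕ × ℕ, -2 * (v.1 : ℤ) + v.2 = -(d.1 : ℤ) ∧
      (v.1 : ℤ) - 2 * v.2 = -(d.2 : ℤ)) :
    d ∈ AddSubmonoid.closure ({(3, 0), (1, 1), (0, 3)} : Set (ℕ × ℕ)) := by
  obtain ⟨⟨a, b⟩, h1, h2⟩ := h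
  simp only at h1 h2
  have e1 : 2 * a = d.1 + b := by omega
  have e2 : 2 * b = d.2 + a := by omega
  have h30 : ((3, 0) : ℕ × ℕ) ∈ AddSubmonoid.closure ({(3, 0), (1, 1), (0, 3)} : Set (ℕ × ℕ)) :=
    AddSubmonoid.subset_closure (by simp)
  have h11 : ((1, 1) : ℕ × ℕ) ∈ AddSubmonoid.closure ({(3, 0), (1, 1), (0, 3)} : Set (ℕ × ℕ)) :=
    AddSubmonoid.subset_closure (by simp)
  have h03 : ((0, 3) : ℕ × ℕ) ∈ AddSubmonoid.closure ({(3, 0), (1, 1), (0, 3)} : Set (ℕ × ℕ)) :=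
    AddSubmonoid.subset_closure (by simp)
  rcases le_total b a with hle | hle
  · have hd : d = (a - b) • ((3, 0) : ℕ × ℕ) + (2 * b - a) • ((1, 1) : ℕ × ℕ) := by
      apply Prod.ext <;> simp [Prod.smul_fst, Prod.smul_snd, smul_eq_mul] <;> omega
    rw [hd]
    exact AddSubmonoid.add_mem _ (AddSubmonoid.nsmul_mem _ h30 _)
      (AddSubmonoid.nsmul_mem _ h11 _)
  · have hd : d = (2 * a - b) • ((1, 1) : ℕ × ℕ) + (b - a) • ((0, 3) : ℕ × ℕ) := by
      apply Prod.ext <;> simp [Prod.smul_fst, Prod.smul_snd, smul_eq_mul] <;> omega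
    rw [hd]
    exact AddSubmonoid.add_mem _ (AddSubmonoid.nsmul_mem _ h11 _)
      (AddSubmonoid.nsmul_mem _ h03 _)
end
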